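/- arXiv:2504.13601 — 2 statements merged into one kernel-verified Lean document; each statement's English description precedes it below -/
import Mathlib

section
/- Let A be a real m × n matrix satisfying A·Aᵀ = a·I_m for some a > 0, and let s ≥ 0 and γ > 0 be reals. Then the matrix s·AᵀA + γ·I_n is invertible, and for all vectors p ∈ ℝⁿ and y ∈ ℝᵐ: (s·AᵀA + γ·I_n)^{−1}·(s·Aᵀy + γ·p) = p + (s/(γ + a·s))·Aᵀ·(y − A·p). -/
/-!
Put `B = AᵀA`. From `AAᵀ = a·I` one gets `B² = a·B` and `B·Aᵀ = a·Aᵀ`, so `B` is `a` times an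
orthogonal projection. On the algebra generated by such a `B` the matrix `s·B + γ·I` has the
explicit inverse `γ⁻¹·(I − c·B)` with `c = s/(γ + a·s)`, and applying it to `s·Aᵀy + γ·p`
collapses, via `B·Aᵀ = a·Aᵀ` and `1 − c·a = γ/(γ + a·s)`, to `p + c·Aᵀ(y − Ap)`.
-/

open Matrix

section QuasiIdempotent

variable {K R : Type*} [Field K] [Ring R] [Algebra K R]

theorem smul_add_smul_one_mul_inverse_of_mul_self_eq_smul {B : R} {a s γ : K}
    (hB : B * B = a • B) (hγ : γ ≠ 0) (hγas : γ + a * s ≠ 0) :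
    (s • B + γ • (1 : R)) * (γ⁻¹ • (1 - (s / (γ + a * s)) • B)) = 1 := by
  simp only [mul_smul_comm, smul_mul_assoc, add_mul, mul_sub, mul_one, one_mul, hB, smul_sub,
    smul_add, smul_smul]
  match_scalars <;> grind

end QuasiIdempotent

section RowOrthogonal

variable {m n R : Type*} [Fintype m] [Fintype n] [CommSemiring R]

theorem Matrix.transpose_mul_self_mul_transpose_of_mul_transpose_eq_smul_one [DecidableEq m]
    {A : Matrix m n R} {a : R} (hA : A * Aᵀ = a • 1) : Aᵀ * A * Aᵀ = a • Aᵀ := by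
  rw [Matrix.mul_assoc, hA, Matrix.mul_smul, Matrix.mul_one]

theorem Matrix.transpose_mul_self_mul_self_of_mul_transpose_eq_smul_one [DecidableEq m]
    {A : Matrix m n R} {a : R} (hA : A * Aᵀ = a • 1) :
    Aᵀ * A * (Aᵀ * A) = a • (Aᵀ * A) := by
  rw [← Matrix.mul_assoc, transpose_mul_self_mul_transpose_of_mul_transpose_eq_smul_one hA,
    Matrix.smul_mul]

end RowOrthogonal

/-- Simplification of the LMMSE estimator `g₁` when
`A·Aᵀ = a·I` with `a > 0`: for `s ≥ 0` and `γ > 0`, the matrix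
`s·AᵀA + γ·I` is invertible and
`(s·AᵀA + γ·I)⁻¹·(s·Aᵀy + γ·p) = p + (s/(γ+a·s))·Aᵀ·(y − A·p)`. -/
theorem lmmse_row_orthogonal_simplification
    (m n : ℕ) (A : Matrix (Fin m) (Fin n) ℝ)
    (a : ℝ) (ha : 0 < a) (hA : A * Aᵀ = a • (1 : Matrix (Fin m) (Fin m) ℝ))
    (s γ : ℝ) (hs : 0 ≤ s) (hγ : 0 < γ) :
    IsUnit (s • (Aᵀ * A) + γ • (1 : Matrix (Fin n) (Fin n) ℝ)) ∧
    ∀ (p : Fin n → ℝ) (y : Fin m → ℝ),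
      (s • (Aᵀ * A) + γ • (1 : Matrix (Fin n) (Fin n) ℝ))⁻¹ *ᵥ
          (s • (Aᵀ *ᵥ y) + γ • p) =
        p + (s / (γ + a * s)) • (Aᵀ *ᵥ (y - A *ᵥ p)) := by
  have hγas : γ + a * s ≠ 0 := by positivity
  have hright := smul_add_smul_one_mul_inverse_of_mul_self_eq_smul
    (transpose_mul_self_mul_self_of_mul_transpose_eq_smul_one hA) hγ.ne' hγas
  refine ⟨.of_mul_eq_one _ hright, fun p y => ?_⟩
  have hBy : (Aᵀ * A) *ᵥ (Aᵀ *ᵥ y) = a • (Aᵀ *ᵥ y) := by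
    rw [mulVec_mulVec, transpose_mul_self_mul_transpose_of_mul_transpose_eq_smul_one hA,
      smul_mulVec]
  rw [inv_eq_right_inv hright, mulVec_sub, mulVec_mulVec, smul_mulVec, sub_mulVec, one_mulVec,
    smul_mulVec, mulVec_add, mulVec_smul, mulVec_smul, hBy]
  match_scalars <;> grind
end

section
/- Consider the limit state-evolution (SE) recursion. Fix an iteration k ≥ 0 and an integer G ≥ 0, and suppose ψ_c^k = 0 for every c ∈ {1,…,Γ} with c ≤ G. Then for every c ∈ {1,…,Γ} with G < c ≤ G + W, the next-iteration effective noise satisfies τ_c^{k+1} ≤ R_all·ϑ·[∫_{(c−G)/W}^{1} F(x) dx + ((c−G)/W)·F(1)]^{−1}. (This is the key induction step in the proof of Proposition 1.) -/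
/-!
Because `ψ^k` is `{0,1}`-valued and vanishes on the blocks `c' ≤ G`, the window average
`σ_r^{k+1}` is at most `min 1 ((r - G) / |W_r|)`. As `F` decreases while `x ↦ x F x` increases,
this gives `F (σ_r^{k+1}) / |W_r| ≥ F (min ((r - G) / W) 1) / W`. For `r = c + j`, `j < W`, the
right-hand sides form a left Riemann sum with step `1 / W` of the decreasing function
`x ↦ F (min x 1)` on `[a, a + 1]`, `a = (c - G) / W`, so their sum dominates
`∫ x in a..a + 1, F (min x 1) = ∫ x in a..1, F x + a F 1`. Inverting this lower bound on the sum
defining `τ_c^{k+1}` gives the claim.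
-/

open MeasureTheory Finset

section ResolventIntegral

variable {ρ : Measure ℝ} {s M : ℝ}

lemma integrable_div_mul_add [IsFiniteMeasure ρ] (hs : 0 < s) (hρ : ∀ᵐ l ∂ρ, l ∈ Set.Ioc 0 M)
    {x : ℝ} (hx : 0 ≤ x) : Integrable (fun l => l / (l * x + s)) ρ := by
  refine (integrable_const (M / s)).mono' (by fun_prop : Measurable _).aestronglyMeasurable ?_
  filter_upwards [hρ] with l ⟨hl, hlM⟩
  rw [Real.norm_of_nonneg (by positivity)]
  calc l / (l * x + s) ≤ l / s := by gcongr; nlinarith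
    _ ≤ M / s := by gcongr

lemma antitoneOn_integral_div_mul_add [IsFiniteMeasure ρ] (hs : 0 < s)
    (hρ : ∀ᵐ l ∂ρ, l ∈ Set.Ioc 0 M) :
    AntitoneOn (fun x => ∫ l, l / (l * x + s) ∂ρ) (Set.Ici 0) := by
  intro x hx y hy hxy
  refine integral_mono_ae (integrable_div_mul_add hs hρ hy) (integrable_div_mul_add hs hρ hx) ?_
  filter_upwards [hρ] with l ⟨hl, _⟩
  have hx : 0 ≤ x := hx
  exact div_le_div_of_nonneg_left hl.le (by positivity) (by gcongr)

lemma monotoneOn_mul_integral_div_mul_add [IsFiniteMeasure ρ] (hs : 0 < s)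
    (hρ : ∀ᵐ l ∂ρ, l ∈ Set.Ioc 0 M) :
    MonotoneOn (fun x => x * ∫ l, l / (l * x + s) ∂ρ) (Set.Ici 0) := by
  intro x hx y hy hxy
  simp only [← integral_const_mul]
  refine integral_mono_ae ((integrable_div_mul_add hs hρ hx).const_mul x)
    ((integrable_div_mul_add hs hρ hy).const_mul y) ?_
  filter_upwards [hρ] with l ⟨hl, _⟩
  have hx : 0 ≤ x := hx
  have hy : 0 ≤ y := hy
  rw [mul_div_assoc', mul_div_assoc', div_le_div_iff₀ (by positivity) (by positivity)]
  nlinarith [mul_nonneg (mul_nonneg (sub_nonneg.2 hxy) hl.le) hs.le]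

lemma integral_div_mul_add_pos [IsFiniteMeasure ρ] [NeZero ρ] (hs : 0 < s)
    (hρ : ∀ᵐ l ∂ρ, l ∈ Set.Ioc 0 M) {x : ℝ} (hx : 0 ≤ x) :
    0 < ∫ l, l / (l * x + s) ∂ρ := by
  have hpos : ∀ᵐ l ∂ρ, 0 < l / (l * x + s) := by
    filter_upwards [hρ] with l ⟨hl, _⟩
    positivity
  rw [integral_pos_iff_support_of_nonneg_ae (hpos.mono fun _ h => h.le)
    (integrable_div_mul_add hs hρ hx)]
  have : Function.support (fun l => l / (l * x + s)) =ᵐ[ρ] (Set.univ : Set ℝ) := by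
    rw [ae_eq_univ]
    have hnull : ρ {l | ¬ 0 < l / (l * x + s)} = 0 := ae_iff.1 hpos
    refine measure_mono_null (fun l hl => ?_) hnull
    simp only [Set.mem_compl_iff, Function.mem_support, not_not] at hl
    simp [hl]
  rw [measure_congr this]
  exact Measure.measure_univ_pos.2 (NeZero.ne ρ)

end ResolventIntegral

lemma exists_ae_mem_Ioc_of_isCompact {ρ : Measure ℝ} {K : Set ℝ} (hK : IsCompact K)
    (hK0 : K ⊆ Set.Ioi 0) (hρK : ρ Kᶜ = 0) : ∃ M, ∀ᵐ l ∂ρ, l ∈ Set.Ioc 0 M := by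
  obtain ⟨M, hM⟩ := hK.bddAbove
  refine ⟨M, ?_⟩
  filter_upwards [mem_ae_iff.2 hρK] with l hl
  exact ⟨hK0 hl, hM hl⟩

lemma MonotoneOn.nonneg_of_mul {F : ℝ → ℝ} (hmono : MonotoneOn (fun x => x * F x) (Set.Ici 0))
    {x : ℝ} (hx : 0 < x) : 0 ≤ F x :=
  nonneg_of_mul_nonneg_right (by simpa using hmono Set.self_mem_Ici hx.le hx.le) hx

lemma div_le_div_of_antitoneOn_of_monotoneOn_mul {F : ℝ → ℝ} (hanti : AntitoneOn F (Set.Ici 0))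
    (hmono : MonotoneOn (fun x => x * F x) (Set.Ici 0)) {σ t n w : ℝ} (hσ : 0 ≤ σ) (ht : 0 < t)
    (hn : 0 < n) (hnw : n ≤ w) (hcov : n * σ ≤ w * t) : F t / w ≤ F σ / n := by
  have hFt : 0 ≤ F t := hmono.nonneg_of_mul ht
  rcases le_or_gt σ t with hσt | htσ
  · calc F t / w ≤ F t / n := div_le_div_of_nonneg_left hFt hn hnw
      _ ≤ F σ / n := by gcongr; exact hanti (Set.mem_Ici.2 hσ) (Set.mem_Ici.2 ht.le) hσt
  · have hσpos : 0 < σ := ht.trans htσ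
    have hFσ : 0 ≤ F σ := hmono.nonneg_of_mul hσpos
    have h1 : t * F t ≤ σ * F σ := hmono (Set.mem_Ici.2 ht.le) (Set.mem_Ici.2 hσ) htσ.le
    rw [div_le_div_iff₀ (hn.trans_le hnw) hn]
    refine le_of_mul_le_mul_left ?_ ht
    calc t * (F t * n) ≤ σ * F σ * n := by nlinarith
      _ = F σ * (n * σ) := by ring
      _ ≤ F σ * (w * t) := by gcongr
      _ = t * (F σ * w) := by ring

lemma AntitoneOn.integral_le_sum_div {g : ℝ → ℝ} {a : ℝ} {N : ℕ} (hN : 0 < N)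
    (hg : AntitoneOn g (Set.Icc a (a + 1))) :
    ∫ x in a..a + 1, g x ≤ (∑ j ∈ range N, g (a + j / N)) / N := by
  have hN' : (0 : ℝ) < N := Nat.cast_pos.2 hN
  have hscaled : AntitoneOn (fun u => g (u / N)) (Set.Icc (a * N) (a * N + N)) := by
    have hmaps : ∀ u ∈ Set.Icc (a * N) (a * N + N), u / N ∈ Set.Icc a (a + 1) := fun u hu =>
      ⟨(le_div_iff₀ hN').2 hu.1, (div_le_iff₀ hN').2 (by linarith [hu.2])⟩
    exact fun u hu v hv huv => hg (hmaps u hu) (hmaps v hv) (by gcongr)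
  have h := hscaled.integral_le_sum
  rw [intervalIntegral.integral_comp_div _ hN'.ne', smul_eq_mul,
    mul_div_cancel_right₀ _ hN'.ne', add_div, mul_div_cancel_right₀ _ hN'.ne',
    div_self hN'.ne'] at h
  rw [le_div_iff₀ hN', mul_comm]
  refine h.trans_eq (sum_congr rfl fun j _ => ?_)
  congr 1
  field_simp

lemma integral_comp_min {F : ℝ → ℝ} {a b c : ℝ} (hab : a ≤ b) (hbc : b ≤ c)
    (hF : IntervalIntegrable F volume a b) :
    ∫ x in a..c, F (min x b) = (∫ x in a..b, F x) + (c - b) * F b := by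
  have hleft : Set.EqOn (fun x => F (min x b)) F (Set.uIcc a b) := fun x hx => by
    rw [Set.uIcc_of_le hab] at hx
    simp [min_eq_left hx.2]
  have hright : Set.EqOn (fun x => F (min x b)) (fun _ => F b) (Set.uIcc b c) := fun x hx => by
    rw [Set.uIcc_of_le hbc] at hx
    simp [min_eq_right hx.1]
  rw [← intervalIntegral.integral_add_adjacent_intervals (b := b)
      ((intervalIntegrable_congr (hleft.mono Set.uIoc_subset_uIcc)).2 hF)
      ((intervalIntegrable_congr (hright.mono Set.uIoc_subset_uIcc)).2 intervalIntegrable_const),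
    intervalIntegral.integral_congr hleft, intervalIntegral.integral_congr hright,
    intervalIntegral.integral_const, smul_eq_mul]

lemma AntitoneOn.integral_add_mul_le_sum_div {F : ℝ → ℝ} (hF : AntitoneOn F (Set.Ici 0)) {a : ℝ}
    (ha0 : 0 ≤ a) (ha1 : a ≤ 1) {N : ℕ} (hN : 0 < N) :
    (∫ x in a..1, F x) + a * F 1 ≤ (∑ j ∈ range N, F (min (a + j / N) 1)) / N := by
  have hFmin : AntitoneOn (fun x => F (min x 1)) (Set.Icc a (a + 1)) :=
    fun x hx y hy hxy => hF (le_min (ha0.trans hx.1) zero_le_one)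
      (le_min (ha0.trans hy.1) zero_le_one) (min_le_min_right 1 hxy)
  calc (∫ x in a..1, F x) + a * F 1 = ∫ x in a..a + 1, F (min x 1) := by
        rw [integral_comp_min ha1 (by linarith)
          (hF.mono fun x hx => ha0.trans (Set.uIcc_of_le ha1 ▸ hx).1).intervalIntegrable]
        ring
    _ ≤ _ := hFmin.integral_le_sum_div hN

lemma integral_add_mul_pos {F : ℝ → ℝ} (hF : MonotoneOn (fun x => x * F x) (Set.Ici 0))
    (hF1 : 0 < F 1) {a : ℝ} (ha0 : 0 < a) (ha1 : a ≤ 1) : 0 < (∫ x in a..1, F x) + a * F 1 :=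
  add_pos_of_nonneg_of_pos
    (intervalIntegral.integral_nonneg ha1 fun _ hx => hF.nonneg_of_mul (ha0.trans_le hx.1))
    (mul_pos ha0 hF1)

lemma sum_Icc_div_mul_eq_sum_range_div {W : ℕ} (hW : 1 ≤ W) (c : ℕ) (f g : ℕ → ℝ) (ϑ : ℝ) :
    ∑ r ∈ Icc c (c + W - 1), f r / (ϑ * g r) = (∑ j ∈ range W, f (c + j) / g (c + j)) / ϑ := by
  have hIcc : Icc c (c + W - 1) = Ico c (c + W) := by ext; simp only [mem_Icc, mem_Ico]; omega
  rw [hIcc, sum_Ico_eq_sum_range, Nat.add_sub_cancel_left, sum_div]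
  simp only [div_div, mul_comm ϑ]

def couplingWindow (Γ W r : ℕ) : Finset ℕ :=
  (Icc 1 Γ).filter fun c => r + 1 ≤ c + W ∧ c ≤ r

lemma couplingWindow_subset (Γ W r : ℕ) : couplingWindow Γ W r ⊆ Icc 1 Γ := filter_subset _ _

lemma card_couplingWindow_le (Γ W r : ℕ) : #(couplingWindow Γ W r) ≤ W := by
  have hsub : couplingWindow Γ W r ⊆ Ioc (r - W) r := fun c hc => by
    simp only [couplingWindow, mem_filter, mem_Icc, mem_Ioc] at hc ⊢
    omega
  have := card_le_card hsub
  rw [Nat.card_Ioc] at this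
  omega

lemma card_couplingWindow_pos {Γ W r : ℕ} (hΓ : 1 ≤ Γ) (hW : 1 ≤ W) (hr : r ∈ Icc 1 (Γ + W - 1)) :
    0 < #(couplingWindow Γ W r) := by
  obtain ⟨hr1, hr⟩ := mem_Icc.1 hr
  refine card_pos.2 ⟨min Γ r, ?_⟩
  simp only [couplingWindow, mem_filter, mem_Icc]
  omega

lemma card_filter_lt_couplingWindow_le (Γ W r G : ℕ) :
    #((couplingWindow Γ W r).filter (G < ·)) ≤ r - G := by
  have hsub : (couplingWindow Γ W r).filter (G < ·) ⊆ Ioc G r := fun c hc => by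
    simp only [couplingWindow, mem_filter, mem_Icc, mem_Ioc] at hc ⊢
    omega
  simpa using card_le_card hsub

lemma Finset.sum_le_card_filter_of_le_one {ι : Type*} {s : Finset ι} {f : ι → ℝ} {p : ι → Prop}
    [DecidablePred p] (h1 : ∀ i ∈ s, f i ≤ 1) (h0 : ∀ i ∈ s, ¬ p i → f i = 0) :
    ∑ i ∈ s, f i ≤ #(s.filter p) := by
  rw [← sum_filter_of_ne fun i hi hne => not_not.1 fun hp => hne (h0 i hi hp)]
  simpa using sum_le_card_nsmul _ f 1 fun i hi => h1 i (mem_filter.1 hi).1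

lemma apply_min_div_le_apply_average_div_card {F : ℝ → ℝ} (hanti : AntitoneOn F (Set.Ici 0))
    (hmono : MonotoneOn (fun x => x * F x) (Set.Ici 0)) {Γ W G r : ℕ} (hΓ : 1 ≤ Γ) (hW : 1 ≤ W)
    (hr : r ∈ Icc 1 (Γ + W - 1)) (hGr : G < r) {ψ : ℕ → ℝ}
    (hψ : ∀ c ∈ Icc 1 Γ, 0 ≤ ψ c ∧ ψ c ≤ 1) (hzero : ∀ c ∈ Icc 1 Γ, c ≤ G → ψ c = 0) :
    F (min (((r : ℝ) - G) / W) 1) / W ≤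
      F ((#(couplingWindow Γ W r) : ℝ)⁻¹ * ∑ c ∈ couplingWindow Γ W r, ψ c) /
        #(couplingWindow Γ W r) := by
  set n := #(couplingWindow Γ W r)
  have hn : (0 : ℝ) < n := Nat.cast_pos.2 (card_couplingWindow_pos hΓ hW hr)
  have hnW : (n : ℝ) ≤ W := Nat.cast_le.2 (card_couplingWindow_le Γ W r)
  have hψ' : ∀ c ∈ couplingWindow Γ W r, 0 ≤ ψ c ∧ ψ c ≤ 1 :=
    fun c hc => hψ c (couplingWindow_subset Γ W r hc)
  have hsum_active : ∑ c ∈ couplingWindow Γ W r, ψ c ≤ r - G := by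
    calc ∑ c ∈ couplingWindow Γ W r, ψ c ≤ #((couplingWindow Γ W r).filter (G < ·)) :=
          sum_le_card_filter_of_le_one (fun c hc => (hψ' c hc).2) fun c hc hcG =>
            hzero c (couplingWindow_subset Γ W r hc) (not_lt.1 hcG)
      _ ≤ ((r - G : ℕ) : ℝ) := Nat.cast_le.2 (card_filter_lt_couplingWindow_le Γ W r G)
      _ = r - G := Nat.cast_sub hGr.le
  have hsum_card : ∑ c ∈ couplingWindow Γ W r, ψ c ≤ n := by
    simpa using sum_le_card_nsmul _ ψ 1 fun c hc => (hψ' c hc).2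
  refine div_le_div_of_antitoneOn_of_monotoneOn_mul hanti hmono
    (mul_nonneg (inv_nonneg.2 hn.le) (sum_nonneg fun c hc => (hψ' c hc).1))
    (lt_min (div_pos (sub_pos.2 (Nat.cast_lt.2 hGr)) (hn.trans_le hnW)) one_pos) hn hnW ?_
  rw [mul_inv_cancel_left₀ hn.ne', mul_min_of_nonneg _ _ (hn.le.trans hnW),
    mul_div_cancel₀ _ (hn.trans_le hnW).ne', mul_one]
  exact le_min hsum_active (hsum_card.trans hnW)

theorem se_induction_step_general
    (Γ W : ℕ)
    (ρ₀ : Measure ℝ) [IsProbabilityMeasure ρ₀]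
    (hsupp : ∃ K : Set ℝ, IsCompact K ∧ K ⊆ Set.Ioi 0 ∧ ρ₀ K = 1)
    (σ₀ : ℝ) (hσ₀ : 0 < σ₀)
    (F : ℝ → ℝ) (hF : ∀ x, F x = ∫ l, l / (l * x + σ₀ ^ 2) ∂ρ₀)
    (Rall : ℝ) (hRall : 0 < Rall)
    (ϑ : ℝ) (hϑ : ϑ = ((Γ : ℝ) + W - 1) / Γ)
    (Wset : ℕ → Finset ℕ)
    (hWset : ∀ r, Wset r = (Finset.Icc 1 Γ).filter fun c => r + 1 ≤ c + W ∧ c ≤ r)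
    (σ φ τ ψ : ℕ → ℕ → ℝ)
    (hφ : ∀ k : ℕ, ∀ r ∈ Finset.Icc 1 (Γ + W - 1), φ k r = F (σ k r))
    (hτ : ∀ k : ℕ, ∀ c ∈ Finset.Icc 1 Γ,
      τ k c = Rall * (∑ r ∈ Finset.Icc c (c + W - 1), φ k r / (ϑ * (Wset r).card))⁻¹)
    (hψ : ∀ k : ℕ, ∀ c ∈ Finset.Icc 1 Γ, ψ k c = if 1 / 2 < τ k c then 1 else 0)
    (hσrec : ∀ k : ℕ, ∀ r ∈ Finset.Icc 1 (Γ + W - 1),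
      σ (k + 1) r = ((Wset r).card : ℝ)⁻¹ * ∑ c ∈ Wset r, ψ k c)
    (k G : ℕ)
    (hzero : ∀ c ∈ Finset.Icc 1 Γ, c ≤ G → ψ k c = 0) :
    ∀ c ∈ Finset.Icc 1 Γ, G < c → c ≤ G + W →
      τ (k + 1) c ≤ Rall * ϑ *
        ((∫ x in (((c - G : ℕ) : ℝ) / W)..1, F x) +
          (((c - G : ℕ) : ℝ) / W) * F 1)⁻¹ := by
  intro c hc hGc hcGW
  obtain rfl : Wset = couplingWindow Γ W := funext hWset
  obtain ⟨K, hK, hK0, hρK⟩ := hsupp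
  obtain ⟨M, hρ⟩ := exists_ae_mem_Ioc_of_isCompact hK hK0
    ((prob_compl_eq_zero_iff hK.isClosed.measurableSet).2 hρK)
  have hs : 0 < σ₀ ^ 2 := by positivity
  have hanti : AntitoneOn F (Set.Ici 0) := funext hF ▸ antitoneOn_integral_div_mul_add hs hρ
  have hmono : MonotoneOn (fun x => x * F x) (Set.Ici 0) :=
    funext hF ▸ monotoneOn_mul_integral_div_mul_add hs hρ
  have hF1 : 0 < F 1 := hF 1 ▸ integral_div_mul_add_pos hs hρ zero_le_one
  have hΓ : 1 ≤ Γ := (mem_Icc.1 hc).1.trans (mem_Icc.1 hc).2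
  have hW : 1 ≤ W := by omega
  have hWpos : (0 : ℝ) < W := Nat.cast_pos.2 hW
  have hΓpos : (0 : ℝ) < Γ := Nat.cast_pos.2 hΓ
  have hϑ : 0 < ϑ := hϑ ▸ div_pos (by linarith [(Nat.one_le_cast (α := ℝ)).2 hW]) hΓpos
  have hψ01 : ∀ c ∈ Icc 1 Γ, 0 ≤ ψ k c ∧ ψ k c ≤ 1 := fun c hc => by
    rw [hψ k c hc]; split_ifs <;> norm_num
  set a : ℝ := ((c - G : ℕ) : ℝ) / W with ha
  have ha0 : 0 < a := div_pos (Nat.cast_pos.2 (by omega)) hWpos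
  have ha1 : a ≤ 1 := (div_le_one hWpos).2 (Nat.cast_le.2 (by omega))
  have hterm : ∀ j ∈ range W, F (min (a + j / W) 1) / W ≤
      φ (k + 1) (c + j) / #(couplingWindow Γ W (c + j)) := fun j hj => by
    have hr : c + j ∈ Icc 1 (Γ + W - 1) := by simp only [mem_Icc, mem_range] at hc hj ⊢; omega
    rw [hφ (k + 1) _ hr, hσrec k _ hr]
    convert apply_min_div_le_apply_average_div_card hanti hmono hΓ hW hr (by omega) hψ01 hzero
      using 4
    rw [ha, Nat.cast_sub hGc.le]; push_cast; ring
  have hlower := ((hanti.integral_add_mul_le_sum_div ha0.le ha1 hW).trans_eq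
    (sum_div _ _ _)).trans (sum_le_sum hterm)
  have hD := integral_add_mul_pos hmono hF1 ha0 ha1
  rw [hτ (k + 1) c hc, sum_Icc_div_mul_eq_sum_range_div hW, inv_div, mul_div_assoc',
    div_eq_mul_inv]
  gcongr

/-- Key induction step in the proof of Proposition 1: if at
iteration `k` one has `ψ_c^k = 0` for all `c ≤ G`, then for every block `c`
with `G < c ≤ G + W`, the next-iteration effective noise satisfies
`τ_c^{k+1} ≤ R_all·ϑ·[∫_{(c−G)/W}^{1} F(x) dx + ((c−G)/W)·F(1)]⁻¹`. -/
theorem se_induction_step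
    (Γ W : ℕ) (hΓ : 1 ≤ Γ) (hW : 1 ≤ W)
    (ρ₀ : Measure ℝ) [IsProbabilityMeasure ρ₀]
    (hsupp : ∃ K : Set ℝ, IsCompact K ∧ K ⊆ Set.Ioi 0 ∧ ρ₀ K = 1)
    (σ₀ : ℝ) (hσ₀ : 0 < σ₀)
    (F : ℝ → ℝ) (hF : ∀ x, F x = ∫ l, l / (l * x + σ₀ ^ 2) ∂ρ₀)
    (Rall : ℝ) (hRall : 0 < Rall)
    (ϑ : ℝ) (hϑ : ϑ = ((Γ : ℝ) + W - 1) / Γ)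
    (Wset : ℕ → Finset ℕ)
    (hWset : ∀ r, Wset r = (Finset.Icc 1 Γ).filter fun c => r + 1 ≤ c + W ∧ c ≤ r)
    (σ φ τ ψ : ℕ → ℕ → ℝ)
    (hσ0 : ∀ r ∈ Finset.Icc 1 (Γ + W - 1), σ 0 r = 1)
    (hφ : ∀ k : ℕ, ∀ r ∈ Finset.Icc 1 (Γ + W - 1), φ k r = F (σ k r))
    (hτ : ∀ k : ℕ, ∀ c ∈ Finset.Icc 1 Γ,
      τ k c = Rall * (∑ r ∈ Finset.Icc c (c + W - 1), φ k r / (ϑ * (Wset r).card))⁻¹)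
    (hψ : ∀ k : ℕ, ∀ c ∈ Finset.Icc 1 Γ, ψ k c = if 1 / 2 < τ k c then 1 else 0)
    (hσrec : ∀ k : ℕ, ∀ r ∈ Finset.Icc 1 (Γ + W - 1),
      σ (k + 1) r = ((Wset r).card : ℝ)⁻¹ * ∑ c ∈ Wset r, ψ k c)
    (k G : ℕ)
    (hzero : ∀ c ∈ Finset.Icc 1 Γ, c ≤ G → ψ k c = 0) :
    ∀ c ∈ Finset.Icc 1 Γ, G < c → c ≤ G + W →
      τ (k + 1) c ≤ Rall * ϑ *
        ((∫ x in (((c - G : ℕ) : ℝ) / W)..1, F x) +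
          (((c - G : ℕ) : ℝ) / W) * F 1)⁻¹ :=
  se_induction_step_general Γ W ρ₀ hsupp σ₀ hσ₀ F hF Rall hRall ϑ hϑ Wset hWset σ φ τ ψ hφ hτ hψ
    hσrec k G hzero
end
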